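/- Let P be a finite-dimensional soluble primitive left Leibniz algebra with socle C. Then there exists a maximal subalgebra M of P with M + C = P and M ∩ C = 0, i.e., P splits over C. -/

import Mathlib

/-- Derived series: `A⁽⁰⁾ = A`, `A⁽ⁿ⁺¹⁾ = (A⁽ⁿ⁾)²`. -/
def derSeries {F A : Type*} [Field F] [AddCommGroup A] [Module F A]
    (mul : A →ₗ[F] A →ₗ[F] A) : ℕ → Submodule F A
  | 0 => ⊤
  | k + 1 => Submodule.span F
      {x : A | ∃ a ∈ derSeries mul k, ∃ b ∈ derSeries mul k, x = mul a b}

/-- `I` is a two-sided ideal. -/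
def IsIdeal {F A : Type*} [Field F] [AddCommGroup A] [Module F A]
    (mul : A →ₗ[F] A →ₗ[F] A) (I : Submodule F A) : Prop :=
  ∀ a : A, ∀ x ∈ I, mul a x ∈ I ∧ mul x a ∈ I

/-- `I` is a minimal ideal. -/
def IsMinIdeal {F A : Type*} [Field F] [AddCommGroup A] [Module F A]
    (mul : A →ₗ[F] A →ₗ[F] A) (I : Submodule F A) : Prop :=
  IsIdeal mul I ∧ I ≠ ⊥ ∧ ∀ J : Submodule F A, IsIdeal mul J → J ≤ I → J = ⊥ ∨ J = I

/-- `U` is a maximal subalgebra. -/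
def IsMaxSubalg {F A : Type*} [Field F] [AddCommGroup A] [Module F A]
    (mul : A →ₗ[F] A →ₗ[F] A) (U : Submodule F A) : Prop :=
  (∀ u ∈ U, ∀ v ∈ U, mul u v ∈ U) ∧ U ≠ ⊤ ∧
    ∀ V : Submodule F A, (∀ u ∈ V, ∀ v ∈ V, mul u v ∈ V) → U < V → V = ⊤

/-!
Since `C_P(C) = C`, the minimal ideal `C` is abelian, so it suffices to find a proper subalgebra
`U` with `U + C = P`: a maximal subalgebra `M ⊇ U` still supplements `C`, and `M ∩ C` is an ideal
(because `C` is abelian), hence `0` by minimality of `C`.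

If `C ≠ P`, take an ideal `D` minimal over `C`; solubility forces `D² ⊆ C`. Were every `L_b`,
`b ∈ D`, nilpotent on `C`, these operators would commute on `C` and have a common zero there,
which produces a nonzero ideal inside `C` centralizing `D`; then `D ⊆ C_P(C) = C`. So some `L_b`
is not nilpotent on `C`, and the Fitting decomposition `P = E_P(b) ⊕ L_b^∞ P`, together with
`L_b² P ⊆ D² ⊆ C`, makes the Engel subalgebra `U = E_P(b)` proper with `U + C = P`.
-/

open Submodule

section CommonKernel

variable {F A : Type*} [Field F] [AddCommGroup A] [Module F A]

theorem exists_ne_zero_apply_eq_zero_of_pow_apply_eq_zero {f : Module.End F A}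
    {W : Submodule F A} (hW : ∀ x ∈ W, f x ∈ W) (k : ℕ) :
    ∀ x ∈ W, x ≠ 0 → (f ^ k) x = 0 → ∃ y ∈ W, y ≠ 0 ∧ f y = 0 := by
  induction k with
  | zero => exact fun x _ hx h => absurd h hx
  | succ k ih =>
    intro x hxW hx hfx
    by_cases h : f x = 0
    · exact ⟨x, hxW, hx, h⟩
    · exact ih (f x) (hW x hxW) h (by rwa [← Module.End.mul_apply, ← pow_succ])

theorem exists_ne_zero_forall_apply_eq_zero [FiniteDimensional F A]
    (S : Set (Module.End F A)) {V : Submodule F A} (hV : V ≠ ⊥)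
    (hmaps : ∀ f ∈ S, ∀ x ∈ V, f x ∈ V)
    (hcomm : ∀ f ∈ S, ∀ g ∈ S, ∀ x ∈ V, f (g x) = g (f x))
    (hnil : ∀ f ∈ S, ∀ x ∈ V, ∃ k, (f ^ k) x = 0) :
    ∃ x ∈ V, x ≠ 0 ∧ ∀ f ∈ S, f x = 0 := by
  let Invariant (W : Submodule F A) : Prop := W ≤ V ∧ W ≠ ⊥ ∧ ∀ f ∈ S, ∀ x ∈ W, f x ∈ W
  obtain ⟨W, hWmin⟩ := exists_minimal_of_wellFoundedLT Invariant ⟨V, le_rfl, hV, hmaps⟩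
  obtain ⟨hWV, hW, hWinv⟩ := hWmin.prop
  obtain ⟨x, hxW, hx⟩ := exists_mem_ne_zero_of_ne_bot hW
  refine ⟨x, hWV hxW, hx, fun f hf => ?_⟩
  -- `W ⊓ ker f` is again invariant and nonzero, so by minimality it is `W`.
  have hker : Invariant (W ⊓ LinearMap.ker f) := by
    refine ⟨inf_le_left.trans hWV, ?_, fun g hg y hy => ⟨hWinv g hg y hy.1, ?_⟩⟩
    · obtain ⟨k, hk⟩ := hnil f hf x (hWV hxW)
      obtain ⟨y, hyW, hy, hfy⟩ :=
        exists_ne_zero_apply_eq_zero_of_pow_apply_eq_zero (hWinv f hf) k x hxW hx hk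
      exact (Submodule.ne_bot_iff _).mpr ⟨y, ⟨hyW, hfy⟩, hy⟩
    · change f (g y) = 0
      rw [hcomm f hf g hg y (hWV hy.1), show f y = 0 from hy.2, map_zero]
  exact (hWmin.eq_of_le hker inf_le_left ▸ hxW).2

end CommonKernel

section Leibniz

variable {F A : Type*} [Field F] [AddCommGroup A] [Module F A] (mul : A →ₗ[F] A →ₗ[F] A)

theorem pow_add_apply_eq_zero_of_derivation {f : Module.End F A}
    (hf : ∀ x y, f (mul x y) = mul (f x) y + mul x (f y)) {p q : ℕ} {x y : A}
    (hx : (f ^ p) x = 0) (hy : (f ^ q) y = 0) : (f ^ (p + q)) (mul x y) = 0 := by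
  suffices h : ∀ n p q x y, p + q = n → (f ^ p) x = 0 → (f ^ q) y = 0 →
      (f ^ n) (mul x y) = 0 from h _ p q x y rfl hx hy
  intro n
  induction n with
  | zero =>
    intro p q x y hpq hx _
    obtain ⟨rfl, rfl⟩ := Nat.add_eq_zero_iff.mp hpq
    simp_all
  | succ n ih =>
    rintro (_ | p) (_ | q) x y hpq hx hy
    · omega
    · simp_all
    · simp_all
    · have hx' : (f ^ p) (f x) = 0 := by rwa [← Module.End.mul_apply, ← pow_succ]
      have hy' : (f ^ q) (f y) = 0 := by rwa [← Module.End.mul_apply, ← pow_succ]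
      rw [pow_succ, Module.End.mul_apply, hf, map_add,
        ih p (q + 1) _ y (by omega) hx' hy, ih (p + 1) q x _ (by omega) hx hy', add_zero]

/-- The Engel subalgebra `E_P(b)`. -/
def engel (b : A) : Submodule F A := ⨆ k, LinearMap.ker (mul b ^ k)

theorem mem_engel {b x : A} : x ∈ engel mul b ↔ ∃ k, (mul b ^ k) x = 0 :=
  mem_iSup_of_directed _ (mul b).iterateKer.monotone.directed_le

theorem mul_mem_engel
    (leibniz : ∀ a b c : A, mul a (mul b c) = mul (mul a b) c + mul b (mul a c))
    {b x y : A} (hx : x ∈ engel mul b) (hy : y ∈ engel mul b) : mul x y ∈ engel mul b := by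
  obtain ⟨p, hp⟩ := (mem_engel mul).mp hx
  obtain ⟨q, hq⟩ := (mem_engel mul).mp hy
  exact (mem_engel mul).mpr ⟨p + q, pow_add_apply_eq_zero_of_derivation mul (leibniz b) hp hq⟩

/-- Fitting decomposition of `L_b`. -/
theorem engel_sup_range_pow_eq_top [FiniteDimensional F A] (b : A) (n : ℕ) :
    engel mul b ⊔ LinearMap.range (mul b ^ n) = ⊤ :=
  top_unique <| (LinearMap.isCompl_iSup_ker_pow_iInf_range_pow (mul b)).sup_eq_top.ge.trans <|
    sup_le_sup_left (iInf_le _ n) _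

theorem IsIdeal.inf {I J : Submodule F A} (hI : IsIdeal mul I) (hJ : IsIdeal mul J) :
    IsIdeal mul (I ⊓ J) := fun a x hx =>
  ⟨⟨(hI a x hx.1).1, (hJ a x hx.2).1⟩, ⟨(hI a x hx.1).2, (hJ a x hx.2).2⟩⟩

theorem IsIdeal.sup {I J : Submodule F A} (hI : IsIdeal mul I) (hJ : IsIdeal mul J) :
    IsIdeal mul (I ⊔ J) := by
  intro a x hx
  obtain ⟨y, hy, z, hz, rfl⟩ := mem_sup.mp hx
  simp only [map_add, LinearMap.add_apply]
  exact ⟨add_mem (mem_sup_left (hI a y hy).1) (mem_sup_right (hJ a z hz).1),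
    add_mem (mem_sup_left (hI a y hy).2) (mem_sup_right (hJ a z hz).2)⟩

theorem isIdeal_span {s : Set A}
    (hs : ∀ a, ∀ x ∈ s, mul a x ∈ span F s ∧ mul x a ∈ span F s) : IsIdeal mul (span F s) := by
  intro a x hx
  have hle : span F s ≤ (span F s).comap (mul a) ⊓ (span F s).comap (mul.flip a) :=
    span_le.mpr fun x hx => hs a x hx
  exact hle hx

def square (D : Submodule F A) : Submodule F A :=
  span F {x | ∃ a ∈ D, ∃ b ∈ D, x = mul a b}

theorem mul_mem_square {D : Submodule F A} {a b : A} (ha : a ∈ D) (hb : b ∈ D) :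
    mul a b ∈ square mul D :=
  subset_span ⟨a, ha, b, hb, rfl⟩

theorem derSeries_succ (k : ℕ) : derSeries mul (k + 1) = square mul (derSeries mul k) := rfl

theorem square_mono {D E : Submodule F A} (h : D ≤ E) : square mul D ≤ square mul E :=
  span_mono fun _ ⟨a, ha, b, hb, hx⟩ => ⟨a, h ha, b, h hb, hx⟩

theorem square_le {D E : Submodule F A} : square mul D ≤ E ↔ ∀ a ∈ D, ∀ b ∈ D, mul a b ∈ E :=
  ⟨fun h _ ha _ hb => h (mul_mem_square mul ha hb),
    fun h => span_le.mpr fun _ ⟨a, ha, b, hb, hx⟩ => hx ▸ h a ha b hb⟩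

theorem IsIdeal.square
    (leibniz : ∀ a b c : A, mul a (mul b c) = mul (mul a b) c + mul b (mul a c))
    {D : Submodule F A} (hD : IsIdeal mul D) : IsIdeal mul (square mul D) := by
  refine isIdeal_span mul fun a _ ⟨x, hx, y, hy, hxy⟩ => ?_
  subst hxy
  have hright : mul (mul x y) a = mul x (mul y a) - mul y (mul x a) := by
    rw [leibniz x y a]; abel
  rw [leibniz a x y, hright]
  exact ⟨add_mem (mul_mem_square mul (hD a x hx).1 hy) (mul_mem_square mul hx (hD a y hy).1),
    sub_mem (mul_mem_square mul hx (hD a y hy).2) (mul_mem_square mul hy (hD a x hx).2)⟩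

theorem square_sup_le {C : Submodule F A} (hC : IsIdeal mul C) (D : Submodule F A) :
    square mul (D ⊔ C) ≤ square mul D ⊔ C := by
  rw [square_le]
  intro x hx y hy
  obtain ⟨d, hd, c, hc, rfl⟩ := mem_sup.mp hx
  obtain ⟨d', hd', c', hc', rfl⟩ := mem_sup.mp hy
  have expand : mul (d + c) (d' + c') = mul d d' + (mul d c' + mul c (d' + c')) := by
    simp only [map_add, LinearMap.add_apply]; abel
  rw [expand]
  exact add_mem (mem_sup_left (mul_mem_square mul hd hd')) (mem_sup_right
    (add_mem (hC d c' hc').1 (hC (d' + c') c hc).2))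

theorem le_of_le_square_sup (hsol : ∃ k, derSeries mul k = ⊥) {C D : Submodule F A}
    (hC : IsIdeal mul C) (hD : D ≤ square mul D ⊔ C) : D ≤ C := by
  obtain ⟨k, hk⟩ := hsol
  suffices h : ∀ k, D ≤ derSeries mul k ⊔ C by simpa [hk] using h k
  intro k
  induction k with
  | zero => exact le_top.trans le_sup_left
  | succ k ih =>
    calc D ≤ square mul D ⊔ C := hD
      _ ≤ square mul (derSeries mul k ⊔ C) ⊔ C := sup_le_sup_right (square_mono mul ih) C
      _ ≤ square mul (derSeries mul k) ⊔ C ⊔ C := sup_le_sup_right (square_sup_le mul hC _) C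
      _ = derSeries mul (k + 1) ⊔ C := by rw [sup_assoc, sup_idem, derSeries_succ]

def centralizer (D : Submodule F A) : Submodule F A :=
  ⨅ a ∈ D, LinearMap.ker (mul.flip a) ⊓ LinearMap.ker (mul a)

theorem mem_centralizer {D : Submodule F A} {x : A} :
    x ∈ centralizer mul D ↔ ∀ a ∈ D, mul x a = 0 ∧ mul a x = 0 := by
  simp [centralizer, mem_iInf]

theorem IsIdeal.centralizer
    (leibniz : ∀ a b c : A, mul a (mul b c) = mul (mul a b) c + mul b (mul a c))
    {D : Submodule F A} (hD : IsIdeal mul D) : IsIdeal mul (centralizer mul D) := by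
  intro p x hx
  rw [mem_centralizer] at hx
  simp only [mem_centralizer]
  refine ⟨fun a ha => ⟨?_, ?_⟩, fun a ha => ⟨?_, ?_⟩⟩
  · have h := leibniz p x a
    rw [(hx a ha).1, map_zero, (hx _ (hD p a ha).1).1, add_zero] at h
    exact h.symm
  · rw [leibniz, (hx _ (hD p a ha).2).2, (hx a ha).2, map_zero, add_zero]
  · have h := leibniz x p a
    rw [(hx _ (hD p a ha).1).1, (hx a ha).1, map_zero, add_zero] at h
    exact h.symm
  · rw [leibniz, (hx a ha).2, (hx _ (hD p a ha).2).1, map_zero, LinearMap.zero_apply, add_zero]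

theorem le_centralizer_comm {C D : Submodule F A} :
    C ≤ centralizer mul D ↔ D ≤ centralizer mul C := by
  simp only [SetLike.le_def, mem_centralizer]
  exact ⟨fun h a ha c hc => (h hc a ha).symm, fun h c hc a ha => (h ha c hc).symm⟩

theorem mul_eq_zero_of_le_centralizer {C : Submodule F A} (h : C ≤ centralizer mul C)
    {c c' : A} (hc : c ∈ C) (hc' : c' ∈ C) : mul c c' = 0 :=
  ((mem_centralizer mul).mp (h hc) c' hc').1

end Leibniz

section Primitive

variable {F A : Type*} [Field F] [AddCommGroup A] [Module F A] (mul : A →ₗ[F] A →ₗ[F] A)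

theorem exists_isMaxSubalg_ge [FiniteDimensional F A] {U : Submodule F A}
    (hU : ∀ u ∈ U, ∀ v ∈ U, mul u v ∈ U) (hUtop : U ≠ ⊤) : ∃ M, U ≤ M ∧ IsMaxSubalg mul M := by
  obtain ⟨M, hUM, hM⟩ := exists_maximal_ge_of_wellFoundedGT
    (fun V : Submodule F A => (∀ u ∈ V, ∀ v ∈ V, mul u v ∈ V) ∧ V ≠ ⊤) U ⟨hU, hUtop⟩
  exact ⟨M, hUM, hM.prop.1, hM.prop.2,
    fun V hV hMV => by_contra fun hVtop => hM.not_gt ⟨hV, hVtop⟩ hMV⟩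

theorem inf_eq_bot_of_sup_eq_top {C M : Submodule F A} (hC : IsMinIdeal mul C)
    (habel : ∀ c ∈ C, ∀ c' ∈ C, mul c c' = 0) (hM : ∀ u ∈ M, ∀ v ∈ M, mul u v ∈ M)
    (hMtop : M ≠ ⊤) (hMC : M ⊔ C = ⊤) : M ⊓ C = ⊥ := by
  obtain ⟨hCideal, -, hCmin⟩ := hC
  have hideal : IsIdeal mul (M ⊓ C) := by
    rintro p z ⟨hzM, hzC⟩
    obtain ⟨m, hm, c, hc, rfl⟩ := mem_sup.mp (hMC ▸ mem_top : p ∈ M ⊔ C)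
    rw [map_add, LinearMap.add_apply, habel c hc z hzC, map_add, habel z hzC c hc,
      add_zero, add_zero]
    exact ⟨⟨hM m hm z hzM, (hCideal m z hzC).1⟩, ⟨hM z hzM m hm, (hCideal m z hzC).2⟩⟩
  refine (hCmin _ hideal inf_le_right).resolve_right fun h => hMtop ?_
  rw [← hMC, sup_eq_left.mpr (inf_eq_right.mp h)]

theorem exists_isIdeal_gt_square_le [FiniteDimensional F A]
    (leibniz : ∀ a b c : A, mul a (mul b c) = mul (mul a b) c + mul b (mul a c))
    (hsol : ∃ k, derSeries mul k = ⊥) {C : Submodule F A} (hC : IsIdeal mul C) (hCtop : C ≠ ⊤) :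
    ∃ D, IsIdeal mul D ∧ C < D ∧ square mul D ≤ C := by
  obtain ⟨D, hDmin⟩ := exists_minimal_of_wellFoundedLT
    (fun D : Submodule F A => IsIdeal mul D ∧ C < D)
    ⟨⊤, fun _ _ _ => ⟨mem_top, mem_top⟩, hCtop.lt_top⟩
  obtain ⟨hD, hCD⟩ := hDmin.prop
  refine ⟨D, hD, hCD, ?_⟩
  have hle : square mul D ⊔ C ≤ D :=
    sup_le ((square_le mul).mpr fun a _ b hb => (hD a b hb).1) hCD.le
  have hlt : square mul D ⊔ C < D :=
    hle.lt_of_ne fun h => hCD.not_ge (le_of_le_square_sup mul hsol hC h.ge)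
  have hnot : ¬ C < square mul D ⊔ C :=
    fun h => hDmin.not_lt ⟨(hD.square mul leibniz).sup mul hC, h⟩ hlt
  exact le_sup_left.trans (eq_of_le_of_not_lt le_sup_right hnot).ge

theorem le_centralizer_of_forall_exists_pow_eq_zero [FiniteDimensional F A]
    (leibniz : ∀ a b c : A, mul a (mul b c) = mul (mul a b) c + mul b (mul a c))
    {C D : Submodule F A} (hC : IsMinIdeal mul C) (habel : ∀ c ∈ C, ∀ c' ∈ C, mul c c' = 0)
    (hD : IsIdeal mul D) (hDC : square mul D ≤ C)
    (hnil : ∀ b ∈ D, ∀ c ∈ C, ∃ k, (mul b ^ k) c = 0) : C ≤ centralizer mul D := by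
  obtain ⟨hCideal, hCne, hCmin⟩ := hC
  have hsq := (square_le mul).mp hDC
  -- On `C` the operators `L_a`, `a ∈ D`, commute because `[L_a, L_a'] = L_{aa'}` and `aa' ∈ C`.
  obtain ⟨x, hxC, hx, hDx⟩ : ∃ x ∈ C, x ≠ 0 ∧ ∀ a ∈ D, mul a x = 0 := by
    obtain ⟨x, hxC, hx, hS⟩ := exists_ne_zero_forall_apply_eq_zero (mul '' D) hCne
      (by rintro _ ⟨a, -, rfl⟩ x hx; exact (hCideal a x hx).1)
      (by
        rintro _ ⟨a, ha, rfl⟩ _ ⟨a', ha', rfl⟩ y hy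
        rw [leibniz, habel _ (hsq a ha a' ha') y hy, zero_add])
      (by rintro _ ⟨a, ha, rfl⟩ c hc; exact hnil a ha c hc)
    exact ⟨x, hxC, hx, fun a ha => hS _ ⟨a, ha, rfl⟩⟩
  have hDxD : ∀ a ∈ D, ∀ a' ∈ D, mul a (mul x a') = 0 := fun a ha a' ha' => by
    rw [leibniz, hDx a ha, map_zero, LinearMap.zero_apply, habel x hxC _ (hsq a ha a' ha'),
      add_zero]
  obtain ⟨w, hwC, hw, hwD⟩ : ∃ w ∈ C, w ≠ 0 ∧ w ∈ centralizer mul D := by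
    by_cases hxD : ∀ a ∈ D, mul x a = 0
    · exact ⟨x, hxC, hx, (mem_centralizer mul).mpr fun a ha => ⟨hxD a ha, hDx a ha⟩⟩
    push Not at hxD
    obtain ⟨a₀, ha₀, hxa₀⟩ := hxD
    refine ⟨mul x a₀, (hCideal a₀ x hxC).2, hxa₀, (mem_centralizer mul).mpr
      fun a ha => ⟨?_, hDxD a ha a₀ ha₀⟩⟩
    have h := leibniz x a₀ a
    rw [habel x hxC _ (hsq a₀ ha₀ a ha), hDxD a₀ ha₀ a ha, add_zero] at h
    exact h.symm
  have hne : C ⊓ centralizer mul D ≠ ⊥ := (Submodule.ne_bot_iff _).mpr ⟨w, ⟨hwC, hwD⟩, hw⟩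
  exact inf_eq_left.mp <| (hCmin _ (hCideal.inf mul (hD.centralizer mul leibniz))
    inf_le_left).resolve_left hne

theorem exists_subalg_ne_top_sup_eq_top [FiniteDimensional F A]
    (leibniz : ∀ a b c : A, mul a (mul b c) = mul (mul a b) c + mul b (mul a c))
    (hsol : ∃ k, derSeries mul k = ⊥) {C : Submodule F A} (hC : IsMinIdeal mul C)
    (hcent : centralizer mul C = C) :
    ∃ U : Submodule F A, (∀ u ∈ U, ∀ v ∈ U, mul u v ∈ U) ∧ U ≠ ⊤ ∧ U ⊔ C = ⊤ := by
  by_cases hCtop : C = ⊤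
  · refine ⟨⊥, by simp, fun h => hC.2.1 (hCtop.trans h.symm), by rw [bot_sup_eq, hCtop]⟩
  obtain ⟨D, hD, hCD, hDC⟩ := exists_isIdeal_gt_square_le mul leibniz hsol hC.1 hCtop
  have habel : ∀ c ∈ C, ∀ c' ∈ C, mul c c' = 0 :=
    fun _ hc _ hc' => mul_eq_zero_of_le_centralizer mul hcent.ge hc hc'
  by_cases hnil : ∀ b ∈ D, ∀ c ∈ C, ∃ k, (mul b ^ k) c = 0
  · have hDC' := (le_centralizer_comm mul).mp
      (le_centralizer_of_forall_exists_pow_eq_zero mul leibniz hC habel hD hDC hnil)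
    exact absurd (hcent ▸ hDC') hCD.not_ge
  push Not at hnil
  obtain ⟨b, hb, c, hc, hbc⟩ := hnil
  refine ⟨engel mul b, fun x hx y hy => mul_mem_engel mul leibniz hx hy, fun h => ?_, top_unique ?_⟩
  · obtain ⟨k, hk⟩ := (mem_engel mul).mp (h ▸ mem_top : c ∈ engel mul b)
    exact hbc k hk
  · rw [← engel_sup_range_pow_eq_top mul b 2]
    refine sup_le_sup_left ?_ _
    rintro _ ⟨x, rfl⟩
    rw [pow_two, Module.End.mul_apply]
    exact (square_le mul).mp hDC b hb _ (hD x b hb).2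

end Primitive

/-- a finite-dimensional soluble primitive left Leibniz algebra splits over
its socle: there is a maximal subalgebra `M` with `M + C = P` and `M ∩ C = 0`. -/
theorem primitive_splits_over_socle {F A : Type*} [Field F] [AddCommGroup A] [Module F A]
    [FiniteDimensional F A]
    (mul : A →ₗ[F] A →ₗ[F] A)
    (leibniz : ∀ a b c : A, mul a (mul b c) = mul (mul a b) c + mul b (mul a c))
    (hsol : ∃ k, derSeries mul k = ⊥)
    (C : Submodule F A) (hC : IsMinIdeal mul C)
    (hcent : {x : A | ∀ c ∈ C, mul x c = 0 ∧ mul c x = 0} = (C : Set A)) :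
    ∃ M : Submodule F A, IsMaxSubalg mul M ∧ M ⊔ C = ⊤ ∧ M ⊓ C = ⊥ := by
  have hcent' : centralizer mul C = C :=
    Submodule.ext fun x => (mem_centralizer mul).trans (Set.ext_iff.mp hcent x)
  have habel : ∀ c ∈ C, ∀ c' ∈ C, mul c c' = 0 :=
    fun _ hc _ hc' => mul_eq_zero_of_le_centralizer mul hcent'.ge hc hc'
  obtain ⟨U, hU, hUtop, hUC⟩ := exists_subalg_ne_top_sup_eq_top mul leibniz hsol hC hcent'
  obtain ⟨M, hUM, hM⟩ := exists_isMaxSubalg_ge mul hU hUtop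
  have hMC : M ⊔ C = ⊤ := top_unique (hUC ▸ sup_le_sup_right hUM C)
  exact ⟨M, hM, hMC, inf_eq_bot_of_sup_eq_top mul hC habel hM.1 hM.2.1 hMC⟩
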